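/- For every i with 1 ≤ i ≤ n, the translation t(ε_i) ∈ GL(F) admits the expression t(ε_i) = s_{i−1} ∘ s_{i−2} ∘ ⋯ ∘ s_1 ∘ s_0 ∘ s_1 ∘ s_2 ∘ ⋯ ∘ s_{n−1} ∘ s_n ∘ s_{n−1} ∘ s_{n−2} ∘ ⋯ ∘ s_{i+1} ∘ s_i as a composition of the generators s_0, s_1, …, s_n (for i = 1 the initial block s_{i−1}⋯s_1 is empty, and for i = n the final block s_{n−1}⋯s_i ends at s_n). -/

import Mathlib

noncomputable section

namespace CvC

/-- Ambient space `F = ℝⁿ ⊕ ℝc`. -/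
abbrev F (n : ℕ) := (Fin n → ℝ) × ℝ

/-- Bilinear form `⟨v + rc, w + sc⟩ = v ⬝ w`. -/
def bform (n : ℕ) (x y : F n) : ℝ := ∑ i, x.1 i * y.1 i

/-- The constant function `c`. -/
def cvec (n : ℕ) : F n := (0, 1)

/-- `eps n i` is the basis vector `ε_i`, for `1 ≤ i ≤ n` (1-based; junk value `0` out of range). -/
def eps (n i : ℕ) : F n :=
  if h : 1 ≤ i ∧ i ≤ n then (Pi.single (⟨i - 1, by omega⟩ : Fin n) 1, 0) else 0

lemma bform_add_left (n : ℕ) (x y z : F n) :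
    bform n (x + y) z = bform n x z + bform n y z := by
  simp [bform, add_mul, Finset.sum_add_distrib]

lemma bform_smul_left (n : ℕ) (c : ℝ) (x z : F n) :
    bform n (c • x) z = c * bform n x z := by
  simp [bform, Finset.mul_sum, mul_assoc]

lemma bform_sub_left (n : ℕ) (x y z : F n) :
    bform n (x - y) z = bform n x z - bform n y z := by
  simp [bform, sub_mul, Finset.sum_sub_distrib]

/-- Reflection `s_f(g) = g − ⟨g, f^∨⟩ f`, `f^∨ = (2/⟨f,f⟩) f`, as a linear endomorphism. -/
def reflMap (n : ℕ) (f : F n) : Module.End ℝ (F n) where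
  toFun g := g - ((2 / bform n f f) * bform n g f) • f
  map_add' x y := by
    try dsimp only
    rw [bform_add_left, mul_add, add_smul]; abel
  map_smul' c x := by
    try dsimp only
    simp only [RingHom.id_apply]
    rw [bform_smul_left, smul_sub, smul_smul, mul_left_comm]

@[simp] lemma reflMap_apply (n : ℕ) (f g : F n) :
    reflMap n f g = g - ((2 / bform n f f) * bform n g f) • f := rfl

lemma reflMap_invol (n : ℕ) (f : F n) (hf : bform n f f ≠ 0) (g : F n) :
    reflMap n f (reflMap n f g) = g := by
  simp only [reflMap_apply]
  rw [bform_sub_left, bform_smul_left, sub_sub, ← add_smul]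
  have key : (2 / bform n f f) * bform n g f +
      (2 / bform n f f) * (bform n g f - (2 / bform n f f) * bform n g f * bform n f f) = 0 := by
    field_simp
    ring
  rw [key, zero_smul, sub_zero]

/-- Translation `t(v)(f) = f − ⟨f, v⟩c`, as a linear endomorphism. -/
def tMap (n : ℕ) (v : Fin n → ℝ) : Module.End ℝ (F n) where
  toFun g := g - bform n g (v, 0) • cvec n
  map_add' x y := by
    try dsimp only
    rw [bform_add_left, add_smul]; abel
  map_smul' c x := by
    try dsimp only
    simp only [RingHom.id_apply]
    rw [bform_smul_left, smul_sub, smul_smul]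

@[simp] lemma tMap_apply (n : ℕ) (v : Fin n → ℝ) (g : F n) :
    tMap n v g = g - bform n g (v, 0) • cvec n := rfl

lemma bform_pair_add (n : ℕ) (g : F n) (v w : Fin n → ℝ) :
    bform n g (v + w, 0) = bform n g (v, 0) + bform n g (w, 0) := by
  simp [bform, mul_add, Finset.sum_add_distrib]

lemma tMap_mul (n : ℕ) (v w : Fin n → ℝ) :
    tMap n v * tMap n w = tMap n (v + w) := by
  apply LinearMap.ext; intro g
  rw [Module.End.mul_apply]
  simp only [tMap_apply]
  rw [bform_sub_left, bform_smul_left]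
  have hc : bform n (cvec n) (v, 0) = 0 := by simp [bform, cvec]
  rw [hc, mul_zero, sub_zero, bform_pair_add, add_smul]
  abel

lemma tMap_zero (n : ℕ) : tMap n 0 = 1 := by
  apply LinearMap.ext; intro g
  rw [Module.End.one_apply, tMap_apply]
  have h0 : bform n g ((0 : Fin n → ℝ), 0) = 0 := by simp [bform]
  rw [h0, zero_smul, sub_zero]

/-- Translation `t(v)` as an invertible endomorphism. -/
def tU (n : ℕ) (v : Fin n → ℝ) : (Module.End ℝ (F n))ˣ where
  val := tMap n v
  inv := tMap n (-v)
  val_inv := by rw [tMap_mul, add_neg_cancel, tMap_zero]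
  inv_val := by rw [tMap_mul, neg_add_cancel, tMap_zero]

/-- Reflection `s_f` as an invertible endomorphism (junk value `1` if `⟨f,f⟩ = 0`). -/
def reflE (n : ℕ) (f : F n) : (Module.End ℝ (F n))ˣ :=
  if hf : bform n f f ≠ 0 then
    { val := reflMap n f
      inv := reflMap n f
      val_inv := by
        apply LinearMap.ext; intro g
        rw [Module.End.mul_apply, Module.End.one_apply]
        exact reflMap_invol n f hf g
      inv_val := by
        apply LinearMap.ext; intro g
        rw [Module.End.mul_apply, Module.End.one_apply]
        exact reflMap_invol n f hf g }
  else 1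

/-- The simple affine roots `a_0, a_1, …, a_n` of type `(C_n^∨, C_n)`:
`a_0 = −2ε_1 + c`, `a_j = ε_j − ε_{j+1}` for `1 ≤ j ≤ n−1`, `a_n = 2ε_n`. -/
def aRootF (n k : ℕ) : F n :=
  if k = 0 then (-(2:ℝ)) • eps n 1 + cvec n
  else if k = n then (2:ℝ) • eps n n
  else eps n k - eps n (k + 1)

/-- The generators `s_0, s_1, …, s_n` of the extended affine Weyl group of type
`(C_n^∨, C_n)`: `s_0 = t(ε_1) ∘ s_{2ε_1}` and `s_i = s_{a_i}` for `1 ≤ i ≤ n`. -/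
def sgen (n k : ℕ) : (Module.End ℝ (F n))ˣ :=
  if k = 0 then tU n (eps n 1).1 * reflE n ((2:ℝ) • eps n 1)
  else reflE n (aRootF n k)

/-- The finite Weyl group `W_0 = ⟨s_1, …, s_n⟩` of type `C_n`. -/
def W0grp (n : ℕ) : Subgroup (Module.End ℝ (F n))ˣ :=
  Subgroup.closure (sgen n '' Set.Icc 1 n)

/-- The extended affine Weyl group `W = ⟨s_0, s_1, …, s_n⟩` of type `(C_n^∨, C_n)`. -/
def Wgrp (n : ℕ) : Subgroup (Module.End ℝ (F n))ˣ :=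
  Subgroup.closure (sgen n '' Set.Icc 0 n)

/-- Product of the generators `s_k` along a list of indices. -/
def du (n : ℕ) (l : List ℕ) : (Module.End ℝ (F n))ˣ := (l.map (sgen n)).prod

/-- The weight lattice `P_{C_n} = ℤε_1 ⊕ ⋯ ⊕ ℤε_n` (as a subset of `ℝⁿ`). -/
def PC (n : ℕ) : Set (Fin n → ℝ) := { v | ∀ i, ∃ m : ℤ, v i = m }

/-- The weight lattice `P_{B_n} = P_{C_n} + ℤ·(1/2)(ε_1 + ⋯ + ε_n)` (as a subset of `ℝⁿ`). -/
def PB (n : ℕ) : Set (Fin n → ℝ) := { v | ∃ k : ℤ, ∀ i, ∃ m : ℤ, v i = m + (k : ℝ)/2 }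

/-- `O_1 = {±ε_i + rc}`. -/
def O1 (n : ℕ) : Set (F n) :=
  { x | ∃ i, 1 ≤ i ∧ i ≤ n ∧ ∃ r : ℤ,
      x = eps n i + (r : ℝ) • cvec n ∨ x = -eps n i + (r : ℝ) • cvec n }

/-- `O_2 = {±2ε_i + 2rc}`. -/
def O2 (n : ℕ) : Set (F n) :=
  { x | ∃ i, 1 ≤ i ∧ i ≤ n ∧ ∃ r : ℤ,
      x = (2:ℝ) • eps n i + ((2*r : ℤ) : ℝ) • cvec n ∨
      x = -((2:ℝ) • eps n i) + ((2*r : ℤ) : ℝ) • cvec n }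

/-- `O_3 = {±ε_i + (r + 1/2)c}`. -/
def O3 (n : ℕ) : Set (F n) :=
  { x | ∃ i, 1 ≤ i ∧ i ≤ n ∧ ∃ r : ℤ,
      x = eps n i + ((r : ℝ) + 1/2) • cvec n ∨
      x = -eps n i + ((r : ℝ) + 1/2) • cvec n }

/-- `O_4 = {±2ε_i + (2r+1)c}`. -/
def O4 (n : ℕ) : Set (F n) :=
  { x | ∃ i, 1 ≤ i ∧ i ≤ n ∧ ∃ r : ℤ,
      x = (2:ℝ) • eps n i + ((2*r+1 : ℤ) : ℝ) • cvec n ∨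
      x = -((2:ℝ) • eps n i) + ((2*r+1 : ℤ) : ℝ) • cvec n }

/-- `O_5 = {±ε_i ± ε_j + rc, i < j}`. -/
def O5 (n : ℕ) : Set (F n) :=
  { x | ∃ i j, 1 ≤ i ∧ i < j ∧ j ≤ n ∧ ∃ r : ℤ,
      x = eps n i + eps n j + (r : ℝ) • cvec n ∨
      x = eps n i - eps n j + (r : ℝ) • cvec n ∨
      x = -eps n i + eps n j + (r : ℝ) • cvec n ∨
      x = -eps n i - eps n j + (r : ℝ) • cvec n }

/-- The five `W`-orbits `O_1, …, O_5` of the affine root system of type `(C_n^∨, C_n)`. -/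
def OO (n : ℕ) : Fin 5 → Set (F n) := ![O1 n, O2 n, O3 n, O4 n, O5 n]

/-- The affine root system `S` of type `(C_n^∨, C_n)`. -/
def Sset (n : ℕ) : Set (F n) := O1 n ∪ O2 n ∪ O3 n ∪ O4 n ∪ O5 n

/-- The set `R̃₊ = {ε_i} ∪ {2ε_i} ∪ {ε_i ± ε_j : i < j}`. -/
def Rtplus (n : ℕ) : Set (F n) :=
  { x | (∃ i, 1 ≤ i ∧ i ≤ n ∧ (x = eps n i ∨ x = (2:ℝ) • eps n i)) ∨
        (∃ i j, 1 ≤ i ∧ i < j ∧ j ≤ n ∧ (x = eps n i + eps n j ∨ x = eps n i - eps n j)) }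

/-- The set of positive affine roots `S⁺`. -/
def Splus (n : ℕ) : Set (F n) :=
  { x ∈ Sset n | 0 < x.2 } ∪ (Sset n ∩ Rtplus n)

lemma sum_single_mul (n : ℕ) (j : Fin n) (v : Fin n → ℝ) :
    ∑ k, v k * (Pi.single j 1 : Fin n → ℝ) k = v j := by
  rw [Finset.sum_eq_single j]
  · simp
  · intro k _ hk
    simp [Pi.single_apply, hk]
  · intro h; exact absurd (Finset.mem_univ j) h

lemma bform_eps_right (n : ℕ) (x : F n) (i : ℕ) (h1 : 1 ≤ i) (h2 : i ≤ n) :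
    bform n x (eps n i) = x.1 ⟨i - 1, by omega⟩ := by
  unfold bform eps
  rw [dif_pos ⟨h1, h2⟩]
  exact sum_single_mul n _ x.1

lemma bform_eps_eps (n i : ℕ) (h1 : 1 ≤ i) (h2 : i ≤ n) :
    bform n (eps n i) (eps n i) = 1 := by
  rw [bform_eps_right n _ i h1 h2]
  unfold eps
  rw [dif_pos ⟨h1, h2⟩]
  simp

/-- `π^{C∨} = π^D`: the linear map with `ε_1 ↦ c − ε_1`, `ε_i ↦ ε_i` (`i ≥ 2`), `c ↦ c`. -/
def piCMap (n : ℕ) : Module.End ℝ (F n) where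
  toFun g := g - bform n g (eps n 1) • ((2:ℝ) • eps n 1 - cvec n)
  map_add' x y := by
    try dsimp only
    rw [bform_add_left, add_smul]; abel
  map_smul' c x := by
    try dsimp only
    simp only [RingHom.id_apply]
    rw [bform_smul_left, smul_sub c, smul_smul]

@[simp] lemma piCMap_apply (n : ℕ) (g : F n) :
    piCMap n g = g - bform n g (eps n 1) • ((2:ℝ) • eps n 1 - cvec n) := rfl

lemma piCMap_invol (n : ℕ) (g : F n) : piCMap n (piCMap n g) = g := by
  rcases Nat.eq_zero_or_pos n with h0 | hpos
  · subst h0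
    have he : eps 0 1 = 0 := by simp [eps]
    simp [piCMap_apply, he, bform]
  · have hE := bform_eps_eps n 1 le_rfl hpos
    have hc : bform n (cvec n) (eps n 1) = 0 := by simp [bform, cvec]
    simp only [piCMap_apply]
    rw [bform_sub_left, bform_smul_left, bform_sub_left, bform_smul_left, hE, hc]
    rw [sub_sub, ← add_smul]
    have key : bform n g (eps n 1) +
        (bform n g (eps n 1) - bform n g (eps n 1) * (2 * 1 - 0)) = 0 := by ring
    rw [key, zero_smul, sub_zero]

/-- `π^{C∨}` as an invertible endomorphism. -/
def piCU (n : ℕ) : (Module.End ℝ (F n))ˣ where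
  val := piCMap n
  inv := piCMap n
  val_inv := by
    apply LinearMap.ext; intro g
    rw [Module.End.mul_apply, Module.End.one_apply]
    exact piCMap_invol n g
  inv_val := by
    apply LinearMap.ext; intro g
    rw [Module.End.mul_apply, Module.End.one_apply]
    exact piCMap_invol n g

/-- `π^{B∨}`: the linear map with `ε_i ↦ (1/2)c − ε_{n−i+1}` and `c ↦ c`. -/
def piBMap (n : ℕ) : Module.End ℝ (F n) where
  toFun g := (fun i => -(g.1 (Fin.rev i)), g.2 + (1/2) * ∑ i, g.1 i)
  map_add' x y := by
    try dsimp only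
    refine Prod.ext ?_ ?_
    · funext i; simp [neg_add]; ring
    · simp [Finset.sum_add_distrib]; ring
  map_smul' c x := by
    try dsimp only
    simp only [RingHom.id_apply]
    refine Prod.ext ?_ ?_
    · funext i; simp [mul_comm]
    · simp only [Prod.smul_snd, Prod.smul_fst, Pi.smul_apply, smul_eq_mul, Finset.mul_sum,
        mul_add]
      congr 1
      exact Finset.sum_congr rfl fun i _ => by ring

@[simp] lemma piBMap_apply (n : ℕ) (g : F n) :
    piBMap n g = (fun i => -(g.1 (Fin.rev i)), g.2 + (1/2) * ∑ i, g.1 i) := rfl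

lemma piBMap_invol (n : ℕ) (g : F n) : piBMap n (piBMap n g) = g := by
  simp only [piBMap_apply]
  refine Prod.ext ?_ ?_
  · funext i; simp
  · have h : ∑ i, -(g.1 (Fin.rev i)) = -∑ i, g.1 i := by
      rw [← Finset.sum_neg_distrib]
      exact Equiv.sum_comp (Equiv.mk Fin.rev Fin.rev Fin.rev_rev Fin.rev_rev) (fun i => -(g.1 i))
    try dsimp only
    rw [h]
    ring

/-- `π^{B∨}` as an invertible endomorphism. -/
def piBU (n : ℕ) : (Module.End ℝ (F n))ˣ where
  val := piBMap n
  inv := piBMap n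
  val_inv := by
    apply LinearMap.ext; intro g
    rw [Module.End.mul_apply, Module.End.one_apply]
    exact piBMap_invol n g
  inv_val := by
    apply LinearMap.ext; intro g
    rw [Module.End.mul_apply, Module.End.one_apply]
    exact piBMap_invol n g

/-- The affine root `a_0^{C∨} = −(ε_1 + ε_2) + c` of Ram–Yip type `C_n^∨`. -/
def a0C (n : ℕ) : F n := -(eps n 1 + eps n 2) + cvec n

/-- The reflection `s_0^{C∨} = s_{a_0^{C∨}}`. -/
def s0C (n : ℕ) : (Module.End ℝ (F n))ˣ := reflE n (a0C n)

/-- The extended affine Weyl group of Ram–Yip type `C_n^∨`: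
`W^{C∨,RY} = ⟨s_0^{C∨}, s_1, …, s_n, π^{C∨}⟩`. -/
def WCRY (n : ℕ) : Subgroup (Module.End ℝ (F n))ˣ :=
  Subgroup.closure ({s0C n, piCU n} ∪ sgen n '' Set.Icc 1 n)

/-- The extended affine Weyl group of Ram–Yip type `B_n^∨`:
`W^{B∨,RY} = ⟨s_0, s_1, …, s_n, π^{B∨}⟩`. -/
def WBRY (n : ℕ) : Subgroup (Module.End ℝ (F n))ˣ :=
  Subgroup.closure (insert (piBU n) (sgen n '' Set.Icc 0 n))

/-- The subgroup generated by `W_0` together with all the translations `t(μ)`, `μ ∈ P_{B_n}`. -/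
def WBtrans (n : ℕ) : Subgroup (Module.End ℝ (F n))ˣ :=
  Subgroup.closure ((sgen n '' Set.Icc 1 n) ∪ (tU n '' PB n))

/-- The defining relators of the extended affine Weyl group of type `(C_n^∨, C_n)`
on the generators `σ_0, …, σ_n`. -/
def rels (n : ℕ) : Set (FreeGroup (Fin (n + 1))) :=
  { r | (∃ i : Fin (n+1), r = FreeGroup.of i * FreeGroup.of i) ∨
        (∃ i j : Fin (n+1), ((i:ℕ) + 1 < (j:ℕ) ∨ (j:ℕ) + 1 < (i:ℕ)) ∧
          r = FreeGroup.of i * FreeGroup.of j * (FreeGroup.of i)⁻¹ * (FreeGroup.of j)⁻¹) ∨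
        (∃ i j : Fin (n+1), 1 ≤ (i:ℕ) ∧ (i:ℕ) ≤ n - 2 ∧ (j:ℕ) = (i:ℕ) + 1 ∧
          r = FreeGroup.of i * FreeGroup.of j * FreeGroup.of i *
              ((FreeGroup.of j)⁻¹ * (FreeGroup.of i)⁻¹ * (FreeGroup.of j)⁻¹)) ∨
        (∃ i j : Fin (n+1), ((i:ℕ) = 0 ∨ (i:ℕ) = n - 1) ∧ (j:ℕ) = (i:ℕ) + 1 ∧
          r = FreeGroup.of i * FreeGroup.of j * FreeGroup.of i * FreeGroup.of j *
              ((FreeGroup.of i)⁻¹ * (FreeGroup.of j)⁻¹ * (FreeGroup.of i)⁻¹ *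
                (FreeGroup.of j)⁻¹)) }


/-! ### Auxiliary lemmas for Statement 5 -/

lemma bform_comm (n : ℕ) (x y : F n) : bform n x y = bform n y x := by
  simp [bform, mul_comm]

lemma bform_sub_right (n : ℕ) (x y z : F n) :
    bform n x (y - z) = bform n x y - bform n x z := by
  rw [bform_comm, bform_sub_left, bform_comm n y, bform_comm n z]

lemma bform_smul_right (n : ℕ) (c : ℝ) (x z : F n) :
    bform n x (c • z) = c * bform n x z := by
  rw [bform_comm, bform_smul_left, bform_comm]

lemma bform_cvec_left (n : ℕ) (x : F n) : bform n (cvec n) x = 0 := by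
  simp [bform, cvec]

lemma bform_eps_eps_ne (n j k : ℕ) (hj1 : 1 ≤ j) (hj2 : j ≤ n)
    (hk1 : 1 ≤ k) (hk2 : k ≤ n) (hjk : j ≠ k) :
    bform n (eps n j) (eps n k) = 0 := by
  rw [bform_eps_right n _ k hk1 hk2]
  unfold eps
  rw [dif_pos ⟨hj1, hj2⟩]
  have : (⟨j - 1, by omega⟩ : Fin n) ≠ ⟨k - 1, by omega⟩ := by
    simp only [ne_eq, Fin.mk.injEq]; omega
  simp [Pi.single_apply, this]

lemma eps_pair (n j : ℕ) : (((eps n j).1, (0:ℝ)) : F n) = eps n j := by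
  unfold eps
  split <;> simp

lemma reflE_val (n : ℕ) (f : F n) (hf : bform n f f ≠ 0) :
    (reflE n f : Module.End ℝ (F n)) = reflMap n f := by
  simp [reflE, hf]

lemma reflE_mul_self (n : ℕ) (f : F n) : reflE n f * reflE n f = 1 := by
  unfold reflE
  split_ifs with hf
  · refine Units.ext ?_
    apply LinearMap.ext; intro g
    simp only [Units.val_mul, Units.val_one, Module.End.mul_apply, Module.End.one_apply]
    exact reflMap_invol n f hf g
  · simp

lemma aRootF_mid (n j : ℕ) (h1 : 1 ≤ j) (h2 : j + 1 ≤ n) :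
    aRootF n j = eps n j - eps n (j + 1) := by
  have hj0 : j ≠ 0 := by omega
  have hjn : j ≠ n := by omega
  simp [aRootF, hj0, hjn]

lemma sgen_mid (n j : ℕ) (h1 : 1 ≤ j) :
    sgen n j = reflE n (aRootF n j) := by
  have hj0 : j ≠ 0 := by omega
  simp [sgen, hj0]

lemma sgen_sq (n j : ℕ) (h1 : 1 ≤ j) : sgen n j * sgen n j = 1 := by
  rw [sgen_mid n j h1]; exact reflE_mul_self n _

lemma bform_two_eps (n j : ℕ) (h1 : 1 ≤ j) (h2 : j ≤ n) :
    bform n ((2:ℝ) • eps n j) ((2:ℝ) • eps n j) = 4 := by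
  rw [bform_smul_left, bform_smul_right, bform_eps_eps n j h1 h2]; norm_num

lemma bform_aRootF_mid (n j : ℕ) (h1 : 1 ≤ j) (h2 : j + 1 ≤ n) :
    bform n (aRootF n j) (aRootF n j) = 2 := by
  rw [aRootF_mid n j h1 h2, bform_sub_left, bform_sub_right, bform_sub_right,
    bform_eps_eps n j h1 (by omega), bform_eps_eps n (j+1) (by omega) h2,
    bform_eps_eps_ne n j (j+1) h1 (by omega) (by omega) h2 (by omega),
    bform_eps_eps_ne n (j+1) j (by omega) h2 h1 (by omega) (by omega)]
  norm_num

/-- Conjugation: `s_j s_{2ε_{j+1}} s_j = s_{2ε_j}`. -/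
lemma conj_refl (n j : ℕ) (h1 : 1 ≤ j) (h2 : j + 1 ≤ n) :
    sgen n j * reflE n ((2:ℝ) • eps n (j+1)) * sgen n j = reflE n ((2:ℝ) • eps n j) := by
  have hjj := bform_eps_eps n j h1 (by omega)
  have hkk := bform_eps_eps n (j+1) (by omega) h2
  have hjk := bform_eps_eps_ne n j (j+1) h1 (by omega) (by omega) h2 (by omega)
  have hkj := bform_eps_eps_ne n (j+1) j (by omega) h2 h1 (by omega) (by omega)
  have haa := bform_aRootF_mid n j h1 h2
  have hbb := bform_two_eps n (j+1) (by omega) h2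
  have hcc := bform_two_eps n j h1 (by omega)
  rw [sgen_mid n j h1]
  refine Units.ext ?_
  rw [Units.val_mul, Units.val_mul,
    reflE_val n _ (by rw [haa]; norm_num),
    reflE_val n _ (by rw [hbb]; norm_num),
    reflE_val n _ (by rw [hcc]; norm_num)]
  apply LinearMap.ext; intro g
  simp only [Module.End.mul_apply, reflMap_apply, aRootF_mid n j h1 h2]
  simp only [bform_sub_left, bform_sub_right, bform_smul_left, bform_smul_right,
    hjj, hkk, hjk, hkj, haa]
  module

/-- Conjugation: `s_j t(ε_j) s_j = t(ε_{j+1})`. -/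
lemma conj_trans (n j : ℕ) (h1 : 1 ≤ j) (h2 : j + 1 ≤ n) :
    sgen n j * tU n (eps n j).1 * sgen n j = tU n (eps n (j+1)).1 := by
  have hjj := bform_eps_eps n j h1 (by omega)
  have hkk := bform_eps_eps n (j+1) (by omega) h2
  have hjk := bform_eps_eps_ne n j (j+1) h1 (by omega) (by omega) h2 (by omega)
  have hkj := bform_eps_eps_ne n (j+1) j (by omega) h2 h1 (by omega) (by omega)
  have haa := bform_aRootF_mid n j h1 h2
  rw [sgen_mid n j h1]
  refine Units.ext ?_
  rw [Units.val_mul, Units.val_mul,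
    reflE_val n _ (by rw [haa]; norm_num)]
  apply LinearMap.ext; intro g
  simp only [Module.End.mul_apply, reflMap_apply, tU, tMap_apply, eps_pair,
    aRootF_mid n j h1 h2]
  simp only [bform_sub_left, bform_sub_right, bform_smul_left, bform_smul_right,
    bform_cvec_left, hjj, hkk, hjk, hkj]
  module

lemma du_nil (n : ℕ) : du n [] = 1 := rfl

lemma du_cons (n : ℕ) (a : ℕ) (l : List ℕ) : du n (a :: l) = sgen n a * du n l := by
  simp [du]

lemma du_append (n : ℕ) (l₁ l₂ : List ℕ) : du n (l₁ ++ l₂) = du n l₁ * du n l₂ := by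
  simp [du]

/-- `s_j s_{j+1} ⋯ s_n ⋯ s_{j+1} s_j = s_{2ε_j}`. -/
lemma palindrome_word (n : ℕ) (d j : ℕ) (hd : d = n - j) (h1 : 1 ≤ j) (h2 : j ≤ n) :
    du n (List.range' j (n + 1 - j) ++ (List.range' j (n - j)).reverse)
      = reflE n ((2:ℝ) • eps n j) := by
  induction d generalizing j with
  | zero =>
    have hj : j = n := by omega
    subst hj
    rw [show j + 1 - j = 1 from by omega, show j - j = 0 from by omega]
    have hj0 : j ≠ 0 := by omega
    have : du j ([j] ++ []) = sgen j j := by simp [du]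
    rw [show List.range' j 1 = [j] from List.range'_one, List.range'_zero,
      List.reverse_nil, this, sgen_mid j j h1]
    congr 1
    simp [aRootF, hj0]
  | succ d ih =>
    have hjn : j + 1 ≤ n := by omega
    have e1 : n + 1 - j = (d + 1) + 1 := by omega
    have e2 : n - j = d + 1 := by omega
    have ihj := ih (j + 1) (by omega) (by omega) hjn
    rw [show n + 1 - (j + 1) = d + 1 from by omega,
      show n - (j + 1) = d from by omega] at ihj
    rw [e1, e2,
      show List.range' j (d + 1 + 1) = j :: List.range' (j + 1) (d + 1) from
        List.range'_succ,
      show List.range' j (d + 1) = j :: List.range' (j + 1) d from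
        List.range'_succ,
      List.reverse_cons,
      show (j :: List.range' (j + 1) (d + 1) 1) ++ ((List.range' (j + 1) d 1).reverse ++ [j])
        = j :: ((List.range' (j + 1) (d + 1) 1 ++ (List.range' (j + 1) d 1).reverse) ++ [j])
        from by simp,
      du_cons, du_append, ihj, show du n [j] = sgen n j from by simp [du],
      ← mul_assoc]
    exact conj_refl n j h1 hjn

/-- `t(ε_1) = s_0 s_{2ε_1}`-based base case. -/
lemma t_eps_one (n : ℕ) (hn : 1 ≤ n) :
    tU n (eps n 1).1 = sgen n 0 * reflE n ((2:ℝ) • eps n 1) := by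
  rw [show sgen n 0 = tU n (eps n 1).1 * reflE n ((2:ℝ) • eps n 1) from by simp [sgen]]
  rw [mul_assoc, reflE_mul_self, mul_one]

/-- the reduced expression
`t(ε_i) = s_{i−1} ⋯ s_1 s_0 s_1 s_2 ⋯ s_{n−1} s_n s_{n−1} ⋯ s_{i+1} s_i`. -/
theorem t_eps_reduced_word (n : ℕ) (hn : 2 ≤ n) (i : ℕ) (h1 : 1 ≤ i) (h2 : i ≤ n) :
    tU n (eps n i).1
      = du n ((List.range i).reverse ++ List.range' 1 n ++ (List.range' i (n - i)).reverse) := by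
  induction i, h1 using Nat.le_induction with
  | base =>
    have hp := palindrome_word n (n - 1) 1 rfl le_rfl (by omega)
    norm_num at hp
    rw [show (List.range 1).reverse = [0] from rfl, du_append, du_append,
      show du n [0] = sgen n 0 from by simp [du], mul_assoc, ← du_append, hp]
    exact t_eps_one n (by omega)
  | succ i hi ih =>
    have hin : i + 1 ≤ n := h2
    have ihi := ih (by omega)
    have e1 : (List.range (i+1)).reverse = i :: (List.range i).reverse := by
      rw [List.range_succ, List.reverse_append]; rfl
    have e2 : List.range' i (n - i) = i :: List.range' (i+1) (n - (i+1)) := by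
      rw [show n - i = (n - (i+1)) + 1 from by omega, List.range'_succ]
    have hw1 : du n ((List.range i).reverse ++ List.range' 1 n
          ++ (List.range' i (n - i)).reverse)
        = du n ((List.range i).reverse ++ List.range' 1 n
            ++ (List.range' (i+1) (n - (i+1))).reverse) * sgen n i := by
      rw [e2, List.reverse_cons, ← List.append_assoc, du_append]
      simp [du]
    have hw2 : du n ((List.range (i+1)).reverse ++ List.range' 1 n
          ++ (List.range' (i+1) (n - (i+1))).reverse)
        = sgen n i * du n ((List.range i).reverse ++ List.range' 1 n
            ++ (List.range' (i+1) (n - (i+1))).reverse) := by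
      simp only [e1, du_append, du_cons, mul_assoc, List.cons_append]
    calc tU n (eps n (i+1)).1
        = sgen n i * tU n (eps n i).1 * sgen n i := (conj_trans n i hi hin).symm
      _ = sgen n i * du n ((List.range i).reverse ++ List.range' 1 n
            ++ (List.range' i (n - i)).reverse) * sgen n i := by rw [ihi]
      _ = du n ((List.range (i+1)).reverse ++ List.range' 1 n
            ++ (List.range' (i+1) (n - (i+1))).reverse) := by
          rw [hw1, hw2, mul_assoc, mul_assoc, sgen_sq n i hi, mul_one]

end CvC
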